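/- Let F be an infinitary propositional formula over σ and A ⊆ σ a set of atoms such that every atom occurring in F belongs to A. Then for any interpretation I, I is an A-stable model of F if and only if I ∩ A is a stable model of F. -/

import Mathlib

/-- Infinitary propositional formulas over signature `σ`:
atoms, conjunctions and disjunctions of (index-)sets of formulas, implication. -/
inductive Formula (σ : Type) : Type 1
  | atom : σ → Formula σ
  | conj : (ι : Type) → (ι → Formula σ) → Formula σ
  | disj : (ι : Type) → (ι → Formula σ) → Formula σ
  | imp : Formula σ → Formula σ → Formula σ

namespace Formula

variable {σ : Type}

/-- `⊥` is the empty disjunction. -/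
def bot : Formula σ := Formula.disj Empty (fun e => e.elim)

/-- Binary conjunction `F ∧ G`. -/
def and (F G : Formula σ) : Formula σ := Formula.conj Bool (fun b => if b then F else G)

/-- Binary disjunction `F ∨ G`. -/
def or (F G : Formula σ) : Formula σ := Formula.disj Bool (fun b => if b then F else G)

/-- Negation `¬F` abbreviates `F → ⊥`. -/
def neg (F : Formula σ) : Formula σ := Formula.imp F bot

/-- Conjunction of a set of atoms. -/
def conjAtoms (S : Set σ) : Formula σ := Formula.conj S (fun p => Formula.atom p.val)

/-- Satisfaction of an infinitary formula by an interpretation `I ⊆ σ`. -/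
def Sat (I : Set σ) : Formula σ → Prop
  | .atom p => p ∈ I
  | .conj _ f => ∀ i, Sat I (f i)
  | .disj _ f => ∃ i, Sat I (f i)
  | .imp F G => Sat I F → Sat I G

open Classical in
/-- The reduct `F^I`. -/
noncomputable def reduct (I : Set σ) : Formula σ → Formula σ
  | .atom p => if p ∈ I then Formula.atom p else bot
  | .conj ι f => Formula.conj ι (fun i => reduct I (f i))
  | .disj ι f => Formula.disj ι (fun i => reduct I (f i))
  | .imp F G => if Sat I (Formula.imp F G) then Formula.imp (reduct I F) (reduct I G) else bot

/-- `I` is an `A`-stable model of `F`: `I` is minimal w.r.t. `≤_A`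
(`J ≤_A I` iff `J ⊆ I` and `I \ J ⊆ A`) among interpretations satisfying `F^I`. -/
def AStable (A : Set σ) (I : Set σ) (F : Formula σ) : Prop :=
  Sat I (reduct I F) ∧ ∀ J : Set σ, J ⊆ I → I \ J ⊆ A → Sat J (reduct I F) → J = I

/-- A stable model is a `σ`-stable model. -/
def Stable (I : Set σ) (F : Formula σ) : Prop := AStable Set.univ I F

/-- The strictly positive atoms `P(F)`. -/
def spos : Formula σ → Set σ
  | .atom p => {p}
  | .conj _ f => ⋃ i, spos (f i)
  | .disj _ f => ⋃ i, spos (f i)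
  | .imp _ H => spos H

/-- `F` is (syntactically) the formula `⊥`, i.e. an empty disjunction. -/
def IsBot : Formula σ → Prop
  | .disj ι _ => IsEmpty ι
  | _ => False

open Classical in
mutual
/-- Positive nonnegated atoms `Pnn(F)`. -/
noncomputable def pnn : Formula σ → Set σ
  | .atom p => {p}
  | .conj _ f => ⋃ i, pnn (f i)
  | .disj _ f => ⋃ i, pnn (f i)
  | .imp G H => if IsBot H then ∅ else nnn G ∪ pnn H

/-- Negative nonnegated atoms `Nnn(F)`. -/
noncomputable def nnn : Formula σ → Set σ
  | .atom _ => ∅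
  | .conj _ f => ⋃ i, nnn (f i)
  | .disj _ f => ⋃ i, nnn (f i)
  | .imp G H => if IsBot H then ∅ else pnn G ∪ nnn H
end

/-- The rules of a formula, as antecedent/consequent pairs. -/
def rules : Formula σ → Set (Formula σ × Formula σ)
  | .atom _ => ∅
  | .conj _ f => ⋃ i, rules (f i)
  | .disj _ f => ⋃ i, rules (f i)
  | .imp G H => insert (G, H) (rules H)

/-- Edge relation of the positive dependency graph `DG_A[F]` (vertex set `A`). -/
noncomputable def DGEdge (F : Formula σ) (A : Set σ) (p q : σ) : Prop :=
  p ∈ A ∧ q ∈ A ∧ ∃ R ∈ rules F, p ∈ spos R.2 ∧ q ∈ pnn R.1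

/-- The atoms occurring in a formula. -/
def atoms : Formula σ → Set σ
  | .atom p => {p}
  | .conj _ f => ⋃ i, atoms (f i)
  | .disj _ f => ⋃ i, atoms (f i)
  | .imp G H => atoms G ∪ atoms H

/-- `G` is a definition for the set `Q` of atoms: a conjunction of formulas
`H ∧ C^∧ → q` with `q ∈ Q`, `C ⊆ Q`, and no atom of `Q` occurring in `H`. -/
def IsDefinition (Q : Set σ) (G : Formula σ) : Prop :=
  ∃ (ι : Type) (g : ι → Formula σ), G = Formula.conj ι g ∧
    ∀ i, ∃ (H : Formula σ) (C : Set σ) (q : σ),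
      q ∈ Q ∧ C ⊆ Q ∧ (∀ p ∈ Q, p ∉ atoms H) ∧
      g i = Formula.imp (Formula.and H (conjAtoms C)) (Formula.atom q)

end Formula

section Graph

variable {V : Type*}

/-- An infinite walk in the directed graph with edge relation `E`. -/
def IsInfWalk (E : V → V → Prop) (w : ℕ → V) : Prop := ∀ i, E (w i) (w (i + 1))

/-- The partition `{P₁, P₂}` is infinitely separable: every infinite walk
visits `P₁` or `P₂` only finitely often. -/
def InfSeparable (E : V → V → Prop) (P1 P2 : Set V) : Prop :=
  ∀ w : ℕ → V, IsInfWalk E w → {i | w i ∈ P1}.Finite ∨ {i | w i ∈ P2}.Finite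

/-- `u` and `v` are in the same strongly connected component:
each is reachable from the other. -/
def SameSCC (E : V → V → Prop) (u v : V) : Prop :=
  Relation.ReflTransGen E u v ∧ Relation.ReflTransGen E v u

/-- The partition `{P₁, P₂}` is separable: every strongly connected
component is contained in `P₁` or in `P₂`. -/
def Separable (E : V → V → Prop) (P1 P2 : Set V) : Prop :=
  ∀ u v, SameSCC E u v → ((u ∈ P1 ∧ v ∈ P1) ∨ (u ∈ P2 ∧ v ∈ P2))

end Graph

/- Both conditions only look at the part of an interpretation inside `A`: the atoms of `F`,
and hence of every reduct of `F`, lie in `A`. And `≤_A`-minimality of `I` amounts to plain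
minimality of `I ∩ A`, because a competitor `J ≤_A I` is determined by `J ∩ A`
(it must contain `I \ A`). -/

theorem forall_sdiff_subset_eq_iff_forall_subset_inter_eq {α : Type*} {P : Set α → Prop}
    {A I : Set α}
    (hP : ∀ J, P (J ∩ A) ↔ P J) :
    (∀ J ⊆ I, I \ J ⊆ A → P J → J = I) ↔ (∀ J ⊆ I ∩ A, P J → J = I ∩ A) := by
  constructor
  · intro hmin J hJ hPJ
    have hJ_inter : (J ∪ I \ A) ∩ A = J := by
      ext x; constructor
      · rintro ⟨hx | hx, hxA⟩
        exacts [hx, absurd hxA hx.2]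
      · exact fun hx => ⟨Or.inl hx, (hJ hx).2⟩
    have hJ_sub : J ∪ I \ A ⊆ I := Set.union_subset (fun x hx => (hJ hx).1) Set.sdiff_subset
    have hJ_diff : I \ (J ∪ I \ A) ⊆ A := fun x ⟨hxI, hx⟩ => by
      by_contra hxA
      exact hx (Or.inr ⟨hxI, hxA⟩)
    have := hmin _ hJ_sub hJ_diff ((hP _).1 (hJ_inter.symm ▸ hPJ))
    rw [← hJ_inter, this]
  · intro hmin J hJ hJ_diff hPJ
    have hJA : J ∩ A = I ∩ A := hmin _ (Set.inter_subset_inter_left A hJ) ((hP J).2 hPJ)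
    refine hJ.antisymm fun x hxI => ?_
    by_cases hxA : x ∈ A
    · exact (hJA.symm ▸ ⟨hxI, hxA⟩ : x ∈ J ∩ A).1
    · by_contra hxJ
      exact hxA (hJ_diff ⟨hxI, hxJ⟩)

namespace Formula

variable {σ : Type}

theorem sat_congr {I J : Set σ} {F : Formula σ} (h : ∀ p ∈ atoms F, p ∈ I ↔ p ∈ J) :
    Sat I F ↔ Sat J F := by
  induction F with
  | atom p => exact h p rfl
  | conj ι f ih => exact forall_congr' fun i => ih i fun p hp => h p (Set.mem_iUnion.2 ⟨i, hp⟩)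
  | disj ι f ih => exact exists_congr fun i => ih i fun p hp => h p (Set.mem_iUnion.2 ⟨i, hp⟩)
  | imp G H ihG ihH =>
    exact imp_congr (ihG fun p hp => h p (Or.inl hp)) (ihH fun p hp => h p (Or.inr hp))

theorem sat_inter_iff {I A : Set σ} {F : Formula σ} (hF : atoms F ⊆ A) :
    Sat (I ∩ A) F ↔ Sat I F :=
  sat_congr fun _ hp => and_iff_left (hF hp)

theorem atoms_bot : atoms (bot : Formula σ) = ∅ :=
  Set.iUnion_of_empty _

theorem atoms_reduct_subset (I : Set σ) (F : Formula σ) : atoms (reduct I F) ⊆ atoms F := by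
  induction F with
  | atom p =>
    simp only [reduct]
    split
    · exact subset_rfl
    · simp [atoms_bot]
  | conj ι f ih => exact Set.iUnion_mono ih
  | disj ι f ih => exact Set.iUnion_mono ih
  | imp G H ihG ihH =>
    simp only [reduct]
    split
    · exact Set.union_subset_union ihG ihH
    · simp [atoms_bot]

open Classical in
theorem reduct_congr {I J : Set σ} {F : Formula σ} (h : ∀ p ∈ atoms F, p ∈ I ↔ p ∈ J) :
    reduct I F = reduct J F := by
  induction F with
  | atom p => exact if_congr (h p rfl) rfl rfl
  | conj ι f ih =>
    simp only [reduct]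
    exact congrArg _ (funext fun i => ih i fun p hp => h p (Set.mem_iUnion.2 ⟨i, hp⟩))
  | disj ι f ih =>
    simp only [reduct]
    exact congrArg _ (funext fun i => ih i fun p hp => h p (Set.mem_iUnion.2 ⟨i, hp⟩))
  | imp G H ihG ihH =>
    simp only [reduct, ihG fun p hp => h p (Or.inl hp), ihH fun p hp => h p (Or.inr hp)]
    exact if_congr (sat_congr h) rfl rfl

theorem reduct_inter {I A : Set σ} {F : Formula σ} (hF : atoms F ⊆ A) :
    reduct (I ∩ A) F = reduct I F :=
  reduct_congr fun _ hp => and_iff_left (hF hp)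

end Formula

/-- if every atom occurring in `F` belongs to `A`, then `I` is an
`A`-stable model of `F` iff `I ∩ A` is a stable model of `F`. -/
theorem astable_iff_inter_stable {σ : Type} (F : Formula σ) (A : Set σ)
    (hocc : Formula.atoms F ⊆ A) (I : Set σ) :
    Formula.AStable A I F ↔ Formula.Stable (I ∩ A) F := by
  have hR : Formula.atoms (Formula.reduct I F) ⊆ A :=
    (Formula.atoms_reduct_subset I F).trans hocc
  simp only [Formula.Stable, Formula.AStable, Formula.reduct_inter hocc, Set.subset_univ,
    forall_const]
  exact and_congr (Formula.sat_inter_iff hR).symm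
    (forall_sdiff_subset_eq_iff_forall_subset_inter_eq fun J => Formula.sat_inter_iff hR)
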